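/- Let u, v ∈ ℚ with Δ = u² + 4v < 0, written u = u₁/u₂ and v = v₁/v₂ in lowest terms with u₂, v₂ > 0, and let d = gcd(u₂, v₂). Let τ ∈ ℂ with Im τ > 0 satisfy τ² = u·τ + v, let L_τ = {m + k·τ : m, k ∈ ℤ}, and let n ≥ 1 be an integer. Then the following are equivalent: (1) there exist g ∈ ℂ and λ ∈ ℂ such that the coset g + L_τ has order exactly n in ℂ/L_τ, λ·L_τ = L_τ + ℤ·g, and λ·(L_τ + ℤ·g) = (1/n)·L_τ (i.e. there is a cyclic subgroup C of order n of E = ℂ/L_τ with (E, C) equivalent to (E/C, E[n]/C)); (2) there exist integers a, b' with gcd(a, b') = 1 such that n = a·(a + (u₁v₂/d)·b') − ((u₂v₂/d)·b')·((u₂v₁/d)·b') and n divides 2a + (u₁v₂/d)·b'. -/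

import Mathlib

noncomputable section

/-- The lattice `ℤ + ℤτ` as a subset of `ℂ`. -/
def latt (τ : ℂ) : Set ℂ := {z | ∃ m k : ℤ, z = (m : ℂ) + (k : ℂ) * τ}

/-- The additive subgroup of `ℂ` generated by the lattice `ℤ + ℤτ` and a point `g`. -/
def lattAdj (τ g : ℂ) : Set ℂ := {z | ∃ m k l : ℤ, z = (m : ℂ) + (k : ℂ) * τ + (l : ℂ) * g}

/-!
Put `c = u₂v₂/d`, `U = cu`, `V = cv`. Then `cτ² = Uτ + V` and no prime divides all of `c, U, V`,
so the complex numbers `γ` with `γL ⊆ L` (where `L = ℤ + ℤτ`) are exactly the `a + cbτ`, `a, b ∈ ℤ`;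
such an element has norm `a(a + Ub) - cb·Vb` and trace `2a + Ub`.

If `g` and `λ` are as in (1), then `α = nλ` satisfies `αL ⊆ L`, so `α = a + cbτ`, and `α²/n = nλ²`
maps `L` onto itself, hence has norm `1`; thus `N(α) = n`. Since `Tr(α)·α/n = α²/n + 1` again
preserves `L` and `gcd(a, b) = 1`, `n` divides `Tr(α)`; and `gcd(a, b) = 1` because for
`e = gcd(a, b)` the point `(n/e)·g = (α/e)·(g/λ)` already lies in `L`.

Conversely, for `α = a + cbτ` as in (2), the quotient `L/αL` is cyclic (the matrix of `α` has
coprime entries), say generated by `W`; then `λ = ᾱ/n` and `g = ᾱW/n` work, using `αᾱ = n` and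
`α + ᾱ ∈ nℤ`.
-/

open Complex ComplexConjugate

lemma exists_bezout_of_forall_prime {a b c : ℤ}
    (h : ∀ ℓ : ℕ, ℓ.Prime → (ℓ : ℤ) ∣ a → (ℓ : ℤ) ∣ b → (ℓ : ℤ) ∣ c → False) :
    ∃ x y z : ℤ, x * a + y * b + z * c = 1 := by
  have hg : Int.gcd (Int.gcd a b) c = 1 := by
    refine Nat.eq_one_iff_not_exists_prime_dvd.mpr fun ℓ hℓ hdvd => ?_
    have hℓg : (ℓ : ℤ) ∣ Int.gcd a b :=
      (Int.natCast_dvd_natCast.mpr hdvd).trans (Int.gcd_dvd_left _ _)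
    exact h ℓ hℓ (hℓg.trans (Int.gcd_dvd_left _ _)) (hℓg.trans (Int.gcd_dvd_right _ _))
      ((Int.natCast_dvd_natCast.mpr hdvd).trans (Int.gcd_dvd_right _ _))
  have hab := Int.gcd_eq_gcd_ab a b
  have habc := Int.gcd_eq_gcd_ab (Int.gcd a b) c
  rw [hg] at habc
  refine ⟨Int.gcdA a b * Int.gcdA (Int.gcd a b) c, Int.gcdB a b * Int.gcdA (Int.gcd a b) c,
    Int.gcdB (Int.gcd a b) c, ?_⟩
  push_cast at habc
  linear_combination -habc - Int.gcdA (Int.gcd a b) c * hab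

lemma exists_forall_prime_dvd_not_dvd_add_mul {p q r s D : ℤ} (hD : D ≠ 0)
    (h : ∀ ℓ : ℕ, ℓ.Prime → (ℓ : ℤ) ∣ p → (ℓ : ℤ) ∣ q → (ℓ : ℤ) ∣ r → (ℓ : ℤ) ∣ s → False) :
    ∃ x : ℤ, ∀ ℓ : ℕ, ℓ.Prime → (ℓ : ℤ) ∣ D →
      (ℓ : ℤ) ∣ x * q + p → (ℓ : ℤ) ∣ x * s + r → False := by
  classical
  -- `x ≡ 0` modulo the primes `ℓ ∣ D` not dividing both `p` and `r`, and `x` is a unit modulo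
  -- the others.
  set T : Finset ℕ := D.natAbs.primeFactors.filter fun ℓ => ¬((ℓ : ℤ) ∣ p ∧ (ℓ : ℤ) ∣ r)
  refine ⟨∏ ℓ ∈ T, (ℓ : ℤ), fun ℓ hℓ hℓD h₁ h₂ => ?_⟩
  by_cases hT : ℓ ∈ T
  · have hx : (ℓ : ℤ) ∣ ∏ ℓ ∈ T, (ℓ : ℤ) := Finset.dvd_prod_of_mem _ hT
    exact (Finset.mem_filter.mp hT).2
      ⟨(dvd_add_right (hx.mul_right q)).mp h₁, (dvd_add_right (hx.mul_right s)).mp h₂⟩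
  · have hpr : (ℓ : ℤ) ∣ p ∧ (ℓ : ℤ) ∣ r := by
      by_contra hpr
      exact hT (Finset.mem_filter.mpr
        ⟨Nat.mem_primeFactors.mpr ⟨hℓ, Int.natCast_dvd.mp hℓD, Int.natAbs_ne_zero.mpr hD⟩, hpr⟩)
    have hℓZ : Prime (ℓ : ℤ) := Nat.prime_iff_prime_int.mp hℓ
    have hx : ¬(ℓ : ℤ) ∣ ∏ ℓ ∈ T, (ℓ : ℤ) := by
      intro hx
      obtain ⟨j, hj, hℓj⟩ := (hℓZ.dvd_finsetProd_iff _).mp hx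
      have hjP := Nat.prime_of_mem_primeFactors (Finset.mem_filter.mp hj).1
      rw [(Nat.prime_dvd_prime_iff_eq hℓ hjP).mp (Int.natCast_dvd_natCast.mp hℓj)] at hT
      exact hT hj
    exact h ℓ hℓ hpr.1 ((hℓZ.dvd_or_dvd ((dvd_add_left hpr.1).mp h₁)).resolve_left hx)
      hpr.2 ((hℓZ.dvd_or_dvd ((dvd_add_left hpr.2).mp h₂)).resolve_left hx)

lemma exists_generator_of_forall_prime {p q r s : ℤ} (hD : p * s - q * r ≠ 0)
    (h : ∀ ℓ : ℕ, ℓ.Prime → (ℓ : ℤ) ∣ p → (ℓ : ℤ) ∣ q → (ℓ : ℤ) ∣ r → (ℓ : ℤ) ∣ s → False) :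
    ∃ x y : ℤ, ∀ e₁ e₂ : ℤ, ∃ l i j : ℤ,
      e₁ = l * x + i * p + j * r ∧ e₂ = l * y + i * q + j * s := by
  obtain ⟨x, hx⟩ := exists_forall_prime_dvd_not_dvd_add_mul hD h
  obtain ⟨z₁, z₂, z₃, hz⟩ :=
    exists_bezout_of_forall_prime fun ℓ hℓ h₁ h₂ hD => hx ℓ hℓ hD h₁ h₂
  -- Cramer's rule `det(A, B)·e = det(e, B)·A + det(A, e)·B` for each pair among `(x, -1)`,
  -- `(p, q)`, `(r, s)`, weighted by the Bézout relation between the three determinants.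
  refine ⟨x, -1, fun e₁ e₂ => ⟨z₁ * (e₁ * q - e₂ * p) + z₂ * (e₁ * s - e₂ * r),
    z₁ * (x * e₂ + e₁) + z₃ * (e₁ * s - e₂ * r), z₂ * (x * e₂ + e₁) + z₃ * (p * e₂ - q * e₁),
    ?_, ?_⟩⟩
  · linear_combination (-e₁) * hz
  · linear_combination (-e₂) * hz

section Lattice

variable {τ z w : ℂ}

lemma latt_add_mem (hz : z ∈ latt τ) (hw : w ∈ latt τ) : z + w ∈ latt τ := by
  obtain ⟨m, k, rfl⟩ := hz
  obtain ⟨m', k', rfl⟩ := hw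
  exact ⟨m + m', k + k', by push_cast; ring⟩

lemma latt_sub_mem (hz : z ∈ latt τ) (hw : w ∈ latt τ) : z - w ∈ latt τ := by
  obtain ⟨m, k, rfl⟩ := hz
  obtain ⟨m', k', rfl⟩ := hw
  exact ⟨m - m', k - k', by push_cast; ring⟩

lemma latt_intCast_mul_mem (l : ℤ) (hz : z ∈ latt τ) : (l : ℂ) * z ∈ latt τ := by
  obtain ⟨m, k, rfl⟩ := hz
  exact ⟨l * m, l * k, by push_cast; ring⟩

lemma one_mem_latt (τ : ℂ) : (1 : ℂ) ∈ latt τ := ⟨1, 0, by simp⟩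

lemma self_mem_latt (τ : ℂ) : τ ∈ latt τ := ⟨0, 1, by simp⟩

lemma mem_lattAdj_iff {g : ℂ} : z ∈ lattAdj τ g ↔ ∃ w ∈ latt τ, ∃ l : ℤ, z = w + l * g := by
  constructor
  · rintro ⟨m, k, l, rfl⟩
    exact ⟨_, ⟨m, k, rfl⟩, l, rfl⟩
  · rintro ⟨_, ⟨m, k, rfl⟩, l, rfl⟩
    exact ⟨m, k, l, rfl⟩

lemma intCast_add_mul_inj (hτ : τ.im ≠ 0) {A B A' B' : ℤ}
    (h : (A : ℂ) + B * τ = A' + B' * τ) : A = A' ∧ B = B' := by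
  have him := congrArg Complex.im h
  have hre := congrArg Complex.re h
  simp only [add_im, add_re, mul_im, mul_re, intCast_re, intCast_im, zero_mul, add_zero,
    zero_add, sub_zero] at him hre
  have hB : (B : ℝ) = B' := mul_right_cancel₀ hτ him
  have hA : (A : ℝ) = A' := by rw [hB] at hre; linarith
  exact ⟨by exact_mod_cast hA, by exact_mod_cast hB⟩

end Lattice

section Multipliers

variable {τ : ℂ} {c U V : ℤ}

lemma mul_conj_eq (hτ : τ.im ≠ 0) (hq : (c : ℂ) * τ ^ 2 = U * τ + V) :
    (c : ℂ) * conj τ = U - c * τ := by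
  have hq' : (c : ℂ) * conj τ ^ 2 = U * conj τ + V := by
    simpa using congrArg conj hq
  have hne : τ - conj τ ≠ 0 := by
    rw [sub_conj]
    exact mul_ne_zero (by exact_mod_cast mul_ne_zero two_ne_zero hτ) I_ne_zero
  exact mul_left_cancel₀ hne (by linear_combination hq - hq')

lemma add_mul_tau_mul_conj (hq : (c : ℂ) * τ ^ 2 = U * τ + V) (a b : ℤ) :
    ((a : ℂ) + c * b * τ) * ((a + U * b) - c * b * τ) =
      ((a * (a + U * b) - c * b * (V * b) : ℤ) : ℂ) := by
  push_cast
  linear_combination (-(b : ℂ) ^ 2 * c) * hq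

lemma normSq_add_mul_tau (hτ : τ.im ≠ 0) (hq : (c : ℂ) * τ ^ 2 = U * τ + V) (a b : ℤ) :
    normSq ((a : ℂ) + c * b * τ) = ((a * (a + U * b) - c * b * (V * b) : ℤ) : ℝ) := by
  have hconj : conj ((a : ℂ) + c * b * τ) = (a + U * b) - c * b * τ := by
    simp only [map_add, map_mul, map_intCast]
    linear_combination (b : ℂ) * mul_conj_eq hτ hq
  have h := mul_conj ((a : ℂ) + c * b * τ)
  rw [hconj, add_mul_tau_mul_conj hq] at h
  exact_mod_cast h.symm

lemma add_mul_tau_mul_mem (hq : (c : ℂ) * τ ^ 2 = U * τ + V) (a b : ℤ) {z : ℂ}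
    (hz : z ∈ latt τ) : ((a : ℂ) + c * b * τ) * z ∈ latt τ := by
  obtain ⟨m, k, rfl⟩ := hz
  exact ⟨a * m + b * k * V, c * b * m + a * k + b * k * U, by
    push_cast; linear_combination ((b : ℂ) * k) * hq⟩

lemma dvd_of_dvd_mul_of_forall_prime
    (hprim : ∀ ℓ : ℕ, ℓ.Prime → (ℓ : ℤ) ∣ c → (ℓ : ℤ) ∣ U → (ℓ : ℤ) ∣ V → False) {q : ℤ}
    (hU : c ∣ q * U) (hV : c ∣ q * V) : c ∣ q := by
  obtain ⟨x, y, z, hxyz⟩ := exists_bezout_of_forall_prime hprim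
  have hq : q = x * q * c + y * (q * U) + z * (q * V) := by linear_combination (-q) * hxyz
  rw [hq]
  exact dvd_add (dvd_add (dvd_mul_left c _) (dvd_mul_of_dvd_right hU _))
    (dvd_mul_of_dvd_right hV _)

lemma exists_eq_add_mul_tau (hτ : τ.im ≠ 0) (hq : (c : ℂ) * τ ^ 2 = U * τ + V)
    (hprim : ∀ ℓ : ℕ, ℓ.Prime → (ℓ : ℤ) ∣ c → (ℓ : ℤ) ∣ U → (ℓ : ℤ) ∣ V → False) {γ : ℂ}
    (hγ : γ ∈ latt τ) (hγτ : γ * τ ∈ latt τ) : ∃ a b : ℤ, γ = a + c * b * τ := by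
  obtain ⟨a, q, rfl⟩ := hγ
  obtain ⟨M, K, hMK⟩ := hγτ
  obtain ⟨hM, hK⟩ := intCast_add_mul_inj hτ (A := c * M) (B := c * K) (A' := q * V)
    (B' := c * a + q * U) (by push_cast; linear_combination (-(c : ℂ)) * hMK + (q : ℂ) * hq)
  obtain ⟨b, rfl⟩ :=
    dvd_of_dvd_mul_of_forall_prime hprim ⟨K - a, by linear_combination -hK⟩ ⟨M, hM.symm⟩
  exact ⟨a, b, by push_cast; ring⟩

lemma dvd_of_mul_add_mul_tau_eq (hτ : τ.im ≠ 0) (hc : c ≠ 0) {a b m n A B : ℤ}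
    (hab : IsCoprime a b) (h : (m : ℂ) * (a + c * b * τ) = n * (A + c * B * τ)) : n ∣ m := by
  obtain ⟨ha, hb⟩ := intCast_add_mul_inj hτ (A := m * a) (B := m * (c * b)) (A' := n * A)
    (B' := n * (c * B)) (by push_cast; linear_combination h)
  have hb' : m * b = n * B := mul_left_cancel₀ hc (by linear_combination hb)
  obtain ⟨x, y, hxy⟩ := hab
  exact ⟨x * A + y * B, by linear_combination (-m) * hxy + x * ha + y * hb'⟩

lemma normSq_eq_one_of_mul_eq_one (hτ : τ.im ≠ 0) (hq : (c : ℂ) * τ ^ 2 = U * τ + V)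
    (hprim : ∀ ℓ : ℕ, ℓ.Prime → (ℓ : ℤ) ∣ c → (ℓ : ℤ) ∣ U → (ℓ : ℤ) ∣ V → False) {γ δ : ℂ}
    (hγ : γ ∈ latt τ) (hγτ : γ * τ ∈ latt τ) (hδ : δ ∈ latt τ) (hδτ : δ * τ ∈ latt τ)
    (h : γ * δ = 1) : normSq γ = 1 := by
  obtain ⟨a, b, rfl⟩ := exists_eq_add_mul_tau hτ hq hprim hγ hγτ
  obtain ⟨a', b', rfl⟩ := exists_eq_add_mul_tau hτ hq hprim hδ hδτ
  have hprod := congrArg normSq h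
  have hnn := normSq_nonneg ((a : ℂ) + c * b * τ)
  rw [normSq_mul, normSq_one, normSq_add_mul_tau hτ hq a' b'] at hprod
  rw [normSq_add_mul_tau hτ hq] at hprod hnn ⊢
  norm_cast at hprod hnn ⊢
  exact Int.eq_one_of_mul_eq_one_right hnn hprod

lemma exists_forall_latt_eq_mul_add (hq : (c : ℂ) * τ ^ 2 = U * τ + V)
    (hprim : ∀ ℓ : ℕ, ℓ.Prime → (ℓ : ℤ) ∣ c → (ℓ : ℤ) ∣ U → (ℓ : ℤ) ∣ V → False) {a b : ℤ}
    (hab : IsCoprime a b) (hN : a * (a + U * b) - c * b * (V * b) ≠ 0) :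
    ∃ W ∈ latt τ, ∀ z ∈ latt τ, ∃ w ∈ latt τ, ∃ l : ℤ, z = ((a : ℂ) + c * b * τ) * w + l * W := by
  have hcontent (ℓ : ℕ) (hℓN : ℓ.Prime) (ha : (ℓ : ℤ) ∣ a) (hcb : (ℓ : ℤ) ∣ c * b)
      (hbV : (ℓ : ℤ) ∣ b * V) (haUb : (ℓ : ℤ) ∣ a + U * b) : False := by
    have hℓ : Prime (ℓ : ℤ) := Nat.prime_iff_prime_int.mp hℓN
    have hb : ¬(ℓ : ℤ) ∣ b := fun hb => hℓ.not_isUnit (hab.isUnit_of_dvd' ha hb)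
    have hUb : (ℓ : ℤ) ∣ U * b := (dvd_add_right ha).mp haUb
    exact hprim ℓ hℓN ((hℓ.dvd_or_dvd hcb).resolve_right hb)
      ((hℓ.dvd_or_dvd hUb).resolve_right hb) ((hℓ.dvd_or_dvd hbV).resolve_left hb)
  obtain ⟨x, y, hspan⟩ :=
    exists_generator_of_forall_prime (fun h => hN (by linear_combination h)) hcontent
  refine ⟨x + y * τ, ⟨x, y, rfl⟩, ?_⟩
  rintro _ ⟨e₁, e₂, rfl⟩
  obtain ⟨l, i, j, h₁, h₂⟩ := hspan e₁ e₂
  refine ⟨i + j * τ, ⟨i, j, rfl⟩, l, ?_⟩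
  rw [h₁, h₂]
  push_cast
  linear_combination (-(b : ℂ) * j) * hq

end Multipliers

section Isogeny

variable {τ g lam : ℂ} {n : ℕ}

lemma natCast_mul_mem_latt_of_mem_lattAdj (hg : (n : ℂ) * g ∈ latt τ) {z : ℂ}
    (hz : z ∈ lattAdj τ g) : (n : ℂ) * z ∈ latt τ := by
  obtain ⟨w, hw, l, rfl⟩ := mem_lattAdj_iff.mp hz
  have h := latt_add_mem (latt_intCast_mul_mem n hw) (latt_intCast_mul_mem l hg)
  push_cast at h
  convert h using 1
  ring

lemma natCast_mul_sq_mul_mem_latt (h₁ : (fun x => lam * x) '' latt τ = lattAdj τ g)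
    (h₂ : (fun x => lam * x) '' lattAdj τ g = (fun x => x / (n : ℂ)) '' latt τ)
    (hn : (n : ℂ) ≠ 0) {z : ℂ} (hz : z ∈ latt τ) : (n : ℂ) * lam ^ 2 * z ∈ latt τ := by
  obtain ⟨w, hw, hwz⟩ : lam * (lam * z) ∈ (fun x => x / (n : ℂ)) '' latt τ :=
    h₂ ▸ ⟨lam * z, h₁ ▸ ⟨z, hz, rfl⟩, rfl⟩
  convert hw using 1
  field_simp at hwz
  linear_combination -hwz

lemma exists_eq_natCast_mul_sq_mul (h₁ : (fun x => lam * x) '' latt τ = lattAdj τ g)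
    (h₂ : (fun x => lam * x) '' lattAdj τ g = (fun x => x / (n : ℂ)) '' latt τ)
    (hn : (n : ℂ) ≠ 0) {z : ℂ} (hz : z ∈ latt τ) : ∃ w ∈ latt τ, z = (n : ℂ) * lam ^ 2 * w := by
  obtain ⟨y, hy, hyz⟩ : z / n ∈ (fun x => lam * x) '' lattAdj τ g := h₂ ▸ ⟨z, hz, rfl⟩
  obtain ⟨w, hw, rfl⟩ : y ∈ (fun x => lam * x) '' latt τ := h₁ ▸ hy
  refine ⟨w, hw, ?_⟩
  field_simp at hyz
  linear_combination -hyz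

lemma normSq_natCast_mul_sq_eq_one {c U V : ℤ} (hτ : τ.im ≠ 0)
    (hq : (c : ℂ) * τ ^ 2 = U * τ + V)
    (hprim : ∀ ℓ : ℕ, ℓ.Prime → (ℓ : ℤ) ∣ c → (ℓ : ℤ) ∣ U → (ℓ : ℤ) ∣ V → False)
    (h₁ : (fun x => lam * x) '' latt τ = lattAdj τ g)
    (h₂ : (fun x => lam * x) '' lattAdj τ g = (fun x => x / (n : ℂ)) '' latt τ)
    (hn : (n : ℂ) ≠ 0) : normSq ((n : ℂ) * lam ^ 2) = 1 := by
  have hγ (z : ℂ) (hz : z ∈ latt τ) := natCast_mul_sq_mul_mem_latt h₁ h₂ hn hz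
  obtain ⟨δ, hδ, hγδ⟩ := exists_eq_natCast_mul_sq_mul h₁ h₂ hn (one_mem_latt τ)
  obtain ⟨δ', hδ', hγδ'⟩ := exists_eq_natCast_mul_sq_mul h₁ h₂ hn (self_mem_latt τ)
  have hδτ : δ * τ = δ' := mul_left_cancel₀ (left_ne_zero_of_mul_eq_one hγδ.symm)
    (by linear_combination -τ * hγδ + hγδ')
  exact normSq_eq_one_of_mul_eq_one hτ hq hprim (by simpa using hγ 1 (one_mem_latt τ))
    (hγ τ (self_mem_latt τ)) hδ (hδτ ▸ hδ') hγδ.symm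

end Isogeny

section Construction

variable {τ α β W n : ℂ}

lemma div_mul_mem_lattAdj (hαβ : α * β = n) (hn : n ≠ 0)
    (hspan : ∀ z ∈ latt τ, ∃ w ∈ latt τ, ∃ l : ℤ, z = α * w + l * W) {z : ℂ}
    (hz : z ∈ latt τ) : β / n * z ∈ lattAdj τ (β * W / n) := by
  obtain ⟨w, hw, l, rfl⟩ := hspan z hz
  refine mem_lattAdj_iff.mpr ⟨w, hw, l, ?_⟩
  field_simp
  linear_combination w * hαβ

lemma image_latt_eq_lattAdj (hαβ : α * β = n) (hn : n ≠ 0)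
    (hα : ∀ z ∈ latt τ, α * z ∈ latt τ) (hW : W ∈ latt τ)
    (hspan : ∀ z ∈ latt τ, ∃ w ∈ latt τ, ∃ l : ℤ, z = α * w + l * W) :
    (fun x => β / n * x) '' latt τ = lattAdj τ (β * W / n) := by
  refine Set.Subset.antisymm ?_ fun y hy => ?_
  · rintro _ ⟨z, hz, rfl⟩
    exact div_mul_mem_lattAdj hαβ hn hspan hz
  · obtain ⟨w, hw, l, rfl⟩ := mem_lattAdj_iff.mp hy
    refine ⟨α * w + l * W, latt_add_mem (hα w hw) (latt_intCast_mul_mem l hW), ?_⟩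
    field_simp
    linear_combination w * hαβ

lemma image_lattAdj_eq_image_div (hαβ : α * β = n) (hn : n ≠ 0) {s : ℤ}
    (hsum : α + β = n * s) (hα : ∀ z ∈ latt τ, α * z ∈ latt τ)
    (hβ : ∀ z ∈ latt τ, β * z ∈ latt τ) (hW : W ∈ latt τ)
    (hspan : ∀ z ∈ latt τ, ∃ w ∈ latt τ, ∃ l : ℤ, z = α * w + l * W) :
    (fun x => β / n * x) '' lattAdj τ (β * W / n) = (fun x => x / n) '' latt τ := by
  refine Set.Subset.antisymm ?_ ?_
  · rintro _ ⟨y, hy, rfl⟩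
    obtain ⟨w, hw, l, rfl⟩ := mem_lattAdj_iff.mp hy
    refine ⟨β * w + (l * s : ℤ) * (β * W) - l * W, ?_, ?_⟩
    · exact latt_sub_mem (latt_add_mem (hβ w hw) (latt_intCast_mul_mem _ (hβ W hW)))
        (latt_intCast_mul_mem l hW)
    · field_simp
      push_cast
      linear_combination (l * W) * hαβ - (l * β * W) * hsum
  · rintro _ ⟨z, hz, rfl⟩
    have hz' : s * (α * z) - z ∈ latt τ := latt_sub_mem (latt_intCast_mul_mem s (hα z hz)) hz
    refine ⟨β / n * (s * (α * z) - z), div_mul_mem_lattAdj hαβ hn hspan hz', ?_⟩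
    field_simp
    linear_combination (z * (s * β + 1)) * hαβ - (z * β) * hsum

lemma intCast_mul_div_mul_mem_latt (hαβ : α * β = n) (hn : n ≠ 0)
    (hspan : ∀ z ∈ latt τ, ∃ w ∈ latt τ, ∃ l : ℤ, z = α * w + l * W) {m : ℤ}
    (hm : (m : ℂ) * (β * W / n) ∈ latt τ) {z : ℂ} (hz : z ∈ latt τ) :
    m * β / n * z ∈ latt τ := by
  obtain ⟨w, hw, l, rfl⟩ := hspan z hz
  convert latt_add_mem (latt_intCast_mul_mem m hw) (latt_intCast_mul_mem l hm) using 1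
  field_simp
  linear_combination (m * w) * hαβ

end Construction

section Equivalence

variable {τ : ℂ} {c U V : ℤ}

lemma gcd_eq_one_of_forall_not_mem (hq : (c : ℂ) * τ ^ 2 = U * τ + V) {n : ℕ} {a b : ℤ}
    {g w : ℂ} (hn : 1 ≤ n) (hN : (n : ℤ) = a * (a + U * b) - c * b * (V * b))
    (hw : w ∈ latt τ) (hg : (n : ℂ) * g = (a + c * b * τ) * w)
    (hord : ∀ m : ℕ, 0 < m → m < n → (m : ℂ) * g ∉ latt τ) : Int.gcd a b = 1 := by
  set e : ℕ := Int.gcd a b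
  obtain ⟨a', ha⟩ : (e : ℤ) ∣ a := Int.gcd_dvd_left a b
  obtain ⟨b', hb⟩ : (e : ℤ) ∣ b := Int.gcd_dvd_right a b
  have hNe : (n : ℤ) = e * (e * (a' * (a' + U * b') - c * b' * (V * b'))) := by
    rw [hN, ha, hb]; ring
  obtain ⟨m, hm⟩ := Int.eq_ofNat_of_zero_le (pos_of_mul_pos_right
    (hNe ▸ (by omega : (0 : ℤ) < n)) (Int.natCast_nonneg e)).le
  rw [hm] at hNe
  have hnem : n = e * m := by exact_mod_cast hNe
  have hm0 : 0 < m := Nat.pos_of_ne_zero fun h => by rw [h] at hnem; omega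
  have he0 : e ≠ 0 := fun h => by rw [h] at hnem; omega
  by_contra he1
  refine hord m hm0 (by nlinarith [(by omega : 2 ≤ e)]) ?_
  have hmg : (m : ℂ) * g = (a' + c * b' * τ) * w := by
    refine mul_left_cancel₀ (Nat.cast_ne_zero.mpr he0) ?_
    rw [← mul_assoc, ← Nat.cast_mul, ← hnem, hg, ha, hb]
    push_cast
    ring
  exact hmg ▸ add_mul_tau_mul_mem hq a' b' hw

theorem exists_coprime_of_isogeny (hτ : τ.im ≠ 0) (hq : (c : ℂ) * τ ^ 2 = U * τ + V)
    (hc : c ≠ 0)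
    (hprim : ∀ ℓ : ℕ, ℓ.Prime → (ℓ : ℤ) ∣ c → (ℓ : ℤ) ∣ U → (ℓ : ℤ) ∣ V → False)
    {n : ℕ} (hn : 1 ≤ n) {g lam : ℂ}
    (hg : (n : ℂ) * g ∈ latt τ) (hord : ∀ m : ℕ, 0 < m → m < n → (m : ℂ) * g ∉ latt τ)
    (h₁ : (fun x => lam * x) '' latt τ = lattAdj τ g)
    (h₂ : (fun x => lam * x) '' lattAdj τ g = (fun x => x / (n : ℂ)) '' latt τ) :
    ∃ a b : ℤ, Int.gcd a b = 1 ∧ (n : ℤ) = a * (a + U * b) - c * b * (V * b) ∧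
      (n : ℤ) ∣ 2 * a + U * b := by
  have hn0 : (n : ℂ) ≠ 0 := Nat.cast_ne_zero.mpr (by omega)
  have hlam (z : ℂ) (hz : z ∈ latt τ) : (n : ℂ) * lam * z ∈ latt τ := by
    rw [mul_assoc]
    exact natCast_mul_mem_latt_of_mem_lattAdj hg (h₁ ▸ ⟨z, hz, rfl⟩)
  obtain ⟨a, b, hα⟩ := exists_eq_add_mul_tau hτ hq hprim
    (by simpa using hlam 1 (one_mem_latt τ)) (hlam τ (self_mem_latt τ))
  have hαγ : ((a : ℂ) + c * b * τ) ^ 2 = n * (n * lam ^ 2) := by rw [← hα]; ring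
  have hN : (n : ℤ) = a * (a + U * b) - c * b * (V * b) := by
    have h := congrArg normSq hαγ
    have hnn := normSq_nonneg ((a : ℂ) + c * b * τ)
    rw [normSq_mul, normSq_natCast_mul_sq_eq_one hτ hq hprim h₁ h₂ hn0, mul_one,
      normSq_natCast, map_pow, normSq_add_mul_tau hτ hq] at h
    rw [normSq_add_mul_tau hτ hq] at hnn
    have h' : (a * (a + U * b) - c * b * (V * b)) ^ 2 = (n : ℤ) * n := by exact_mod_cast h
    have hnn' : 0 ≤ a * (a + U * b) - c * b * (V * b) := by exact_mod_cast hnn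
    nlinarith
  obtain ⟨w, hw, rfl⟩ : g ∈ (fun x => lam * x) '' latt τ := h₁ ▸ ⟨0, 0, 1, by push_cast; ring⟩
  have hab := gcd_eq_one_of_forall_not_mem hq hn hN hw (by rw [← hα]; ring) hord
  have hγ (z : ℂ) (hz : z ∈ latt τ) := natCast_mul_sq_mul_mem_latt h₁ h₂ hn0 hz
  obtain ⟨A, B, hAB⟩ := exists_eq_add_mul_tau hτ hq hprim
    (latt_add_mem (by simpa using hγ 1 (one_mem_latt τ)) (one_mem_latt τ))
    (by simpa [add_mul] using latt_add_mem (hγ τ (self_mem_latt τ)) (self_mem_latt τ))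
  refine ⟨a, b, hab, hN, dvd_of_mul_add_mul_tau_eq hτ hc (Int.isCoprime_iff_gcd_eq_one.mpr hab)
    (A := A) (B := B) ?_⟩
  have hconj := add_mul_tau_mul_conj hq a b
  rw [← hN] at hconj
  push_cast at hconj ⊢
  linear_combination hconj + hαγ + (n : ℂ) * hAB

theorem exists_isogeny_of_coprime (hτ : τ.im ≠ 0) (hq : (c : ℂ) * τ ^ 2 = U * τ + V)
    (hc : c ≠ 0)
    (hprim : ∀ ℓ : ℕ, ℓ.Prime → (ℓ : ℤ) ∣ c → (ℓ : ℤ) ∣ U → (ℓ : ℤ) ∣ V → False)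
    {n : ℕ} (hn : 1 ≤ n) {a b : ℤ} (hab : Int.gcd a b = 1)
    (hN : (n : ℤ) = a * (a + U * b) - c * b * (V * b)) (ht : (n : ℤ) ∣ 2 * a + U * b) :
    ∃ g lam : ℂ, ((n : ℂ) * g ∈ latt τ ∧ ∀ m : ℕ, 0 < m → m < n → (m : ℂ) * g ∉ latt τ) ∧
      (fun x => lam * x) '' latt τ = lattAdj τ g ∧
      (fun x => lam * x) '' lattAdj τ g = (fun x => x / (n : ℂ)) '' latt τ := by
  obtain ⟨s, hs⟩ := ht
  have hn0 : (n : ℂ) ≠ 0 := Nat.cast_ne_zero.mpr (by omega)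
  have hab : IsCoprime a b := Int.isCoprime_iff_gcd_eq_one.mpr hab
  have hαβ : ((a : ℂ) + c * b * τ) * ((a + U * b) - c * b * τ) = n := by
    rw [add_mul_tau_mul_conj hq, ← hN, Int.cast_natCast]
  have hsum : ((a : ℂ) + c * b * τ) + ((a + U * b) - c * b * τ) = n * s := by
    have hsC : ((2 * a + U * b : ℤ) : ℂ) = ((n * s : ℤ) : ℂ) := congrArg _ hs
    push_cast at hsC
    linear_combination hsC
  have hα (z : ℂ) (hz : z ∈ latt τ) := add_mul_tau_mul_mem hq a b hz
  have hβ (z : ℂ) (hz : z ∈ latt τ) : ((a + U * b) - c * b * τ) * z ∈ latt τ := by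
    simpa [sub_eq_add_neg] using add_mul_tau_mul_mem hq (a + U * b) (-b) hz
  obtain ⟨W, hW, hspan⟩ := exists_forall_latt_eq_mul_add hq hprim hab (by omega)
  refine ⟨((a + U * b) - c * b * τ) * W / n, ((a + U * b) - c * b * τ) / n, ⟨?_, ?_⟩,
    image_latt_eq_lattAdj hαβ hn0 hα hW hspan,
    image_lattAdj_eq_image_div hαβ hn0 hsum hα hβ hW hspan⟩
  · rw [mul_div_cancel₀ _ hn0]
    exact hβ W hW
  · intro m hm0 hmn hm
    have hδ (z : ℂ) (hz : z ∈ latt τ) :=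
      intCast_mul_div_mul_mem_latt hαβ hn0 hspan (m := m) (by exact_mod_cast hm) hz
    obtain ⟨A, B, hAB⟩ := exists_eq_add_mul_tau hτ hq hprim
      (by simpa using hδ 1 (one_mem_latt τ)) (hδ τ (self_mem_latt τ))
    have hdvd := dvd_of_mul_add_mul_tau_eq hτ hc ((hab.add_mul_right_left U).neg_right)
      (m := m) (n := n) (A := A) (B := B) (by
        rw [← hAB]
        field_simp
        push_cast
        ring)
    have := Int.le_of_dvd (by omega) hdvd
    omega

end Equivalence

lemma not_prime_dvd_of_lowest_terms {u₁ u₂ v₁ v₂ Q P d : ℤ} (hcu : Int.gcd u₁ u₂ = 1)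
    (hcv : Int.gcd v₁ v₂ = 1) (hQP : Int.gcd Q P = 1) (hQ : u₂ = Q * d) (ℓ : ℕ) (hℓ : ℓ.Prime)
    (hc : (ℓ : ℤ) ∣ Q * v₂) (hU : (ℓ : ℤ) ∣ u₁ * P) (hV : (ℓ : ℤ) ∣ Q * v₁) : False := by
  have hℓ : Prime (ℓ : ℤ) := Nat.prime_iff_prime_int.mp hℓ
  have hcop {x y : ℤ} (h : Int.gcd x y = 1) (hx : (ℓ : ℤ) ∣ x) (hy : (ℓ : ℤ) ∣ y) : False :=
    hℓ.not_isUnit ((Int.isCoprime_iff_gcd_eq_one.mpr h).isUnit_of_dvd' hx hy)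
  have hℓQ : (ℓ : ℤ) ∣ Q := (hℓ.dvd_or_dvd hc).elim id fun hv₂ =>
    (hℓ.dvd_or_dvd hV).resolve_right fun hv₁ => hcop hcv hv₁ hv₂
  have hℓu₂ : (ℓ : ℤ) ∣ u₂ := hQ ▸ dvd_mul_of_dvd_left hℓQ d
  exact hcop hQP hℓQ ((hℓ.dvd_or_dvd hU).resolve_left fun hu₁ => hcop hcu hu₁ hℓu₂)

theorem stmt_8_general (u v : ℚ) (u₁ u₂ v₁ v₂ : ℤ) (hu₂ : 0 < u₂) (hv₂ : 0 < v₂)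
    (hu : u = (u₁ : ℚ) / (u₂ : ℚ)) (hv : v = (v₁ : ℚ) / (v₂ : ℚ))
    (hcu : Int.gcd u₁ u₂ = 1) (hcv : Int.gcd v₁ v₂ = 1)
    (d : ℤ) (hd : d = Int.gcd u₂ v₂)
    (τ : ℂ) (hτ : 0 < τ.im) (hquad : τ ^ 2 = (u : ℂ) * τ + (v : ℂ))
    (n : ℕ) (hn : 1 ≤ n) :
    (∃ g lam : ℂ,
        ((n : ℂ) * g ∈ latt τ ∧ ∀ m : ℕ, 0 < m → m < n → (m : ℂ) * g ∉ latt τ) ∧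
        (fun x => lam * x) '' latt τ = lattAdj τ g ∧
        (fun x => lam * x) '' lattAdj τ g = (fun x => x / (n : ℂ)) '' latt τ) ↔
    (∃ a b' : ℤ, Int.gcd a b' = 1 ∧
        (n : ℤ) = a * (a + u₁ * v₂ / d * b') - (u₂ * v₂ / d * b') * (u₂ * v₁ / d * b') ∧
        (n : ℤ) ∣ 2 * a + u₁ * v₂ / d * b') := by
  have hgcd : 0 < Int.gcd u₂ v₂ := Int.gcd_pos_of_ne_zero_left _ hu₂.ne'
  obtain ⟨Q, P, hQP, hQ, hP⟩ := Int.exists_gcd_one hgcd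
  rw [← hd] at hQ hP
  have hd0 : d ≠ 0 := by rw [hd]; exact_mod_cast hgcd.ne'
  rw [show u₂ * v₂ / d = Q * v₂ by rw [hQ, mul_right_comm, Int.mul_ediv_cancel _ hd0],
    show u₁ * v₂ / d = u₁ * P by rw [hP, ← mul_assoc, Int.mul_ediv_cancel _ hd0],
    show u₂ * v₁ / d = Q * v₁ by rw [hQ, mul_right_comm, Int.mul_ediv_cancel _ hd0]]
  have hQ0 : Q ≠ 0 := by rintro rfl; omega
  have hq : ((Q * v₂ : ℤ) : ℂ) * τ ^ 2 = ((u₁ * P : ℤ) : ℂ) * τ + ((Q * v₁ : ℤ) : ℂ) := by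
    have hdC : (d : ℂ) ≠ 0 := Int.cast_ne_zero.mpr hd0
    have hQC : (Q : ℂ) ≠ 0 := Int.cast_ne_zero.mpr hQ0
    have hPC : (P : ℂ) ≠ 0 := Int.cast_ne_zero.mpr (by rintro rfl; omega)
    rw [hquad, hu, hv, hQ, hP]
    push_cast
    field_simp
  have hprim := not_prime_dvd_of_lowest_terms hcu hcv hQP hQ
  exact ⟨fun ⟨g, lam, ⟨hg, hord⟩, h₁, h₂⟩ =>
      exists_coprime_of_isogeny hτ.ne' hq (by positivity) hprim hn hg hord h₁ h₂,
    fun ⟨a, b, hab, hN, ht⟩ =>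
      exists_isogeny_of_coprime hτ.ne' hq (by positivity) hprim hn hab hN ht⟩

theorem stmt_8 (u v : ℚ) (u₁ u₂ v₁ v₂ : ℤ) (hu₂ : 0 < u₂) (hv₂ : 0 < v₂)
    (hu : u = (u₁ : ℚ) / (u₂ : ℚ)) (hv : v = (v₁ : ℚ) / (v₂ : ℚ))
    (hcu : Int.gcd u₁ u₂ = 1) (hcv : Int.gcd v₁ v₂ = 1)
    (d : ℤ) (hd : d = Int.gcd u₂ v₂)
    (hΔ : u ^ 2 + 4 * v < 0)
    (τ : ℂ) (hτ : 0 < τ.im) (hquad : τ ^ 2 = (u : ℂ) * τ + (v : ℂ))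
    (n : ℕ) (hn : 1 ≤ n) :
    (∃ g lam : ℂ,
        ((n : ℂ) * g ∈ latt τ ∧ ∀ m : ℕ, 0 < m → m < n → (m : ℂ) * g ∉ latt τ) ∧
        (fun x => lam * x) '' latt τ = lattAdj τ g ∧
        (fun x => lam * x) '' lattAdj τ g = (fun x => x / (n : ℂ)) '' latt τ) ↔
    (∃ a b' : ℤ, Int.gcd a b' = 1 ∧
        (n : ℤ) = a * (a + u₁ * v₂ / d * b') - (u₂ * v₂ / d * b') * (u₂ * v₁ / d * b') ∧
        (n : ℤ) ∣ 2 * a + u₁ * v₂ / d * b') :=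
  stmt_8_general u v u₁ u₂ v₁ v₂ hu₂ hv₂ hu hv hcu hcv d hd τ hτ hquad n hn
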